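/- arXiv:2001.03146 — 4 statements merged into one kernel-verified Lean document; each statement's English description precedes it below -/
import Mathlib

section
/- Let w, b ∈ ℂ^n and σ > 0. For every n×n complex positive semidefinite Hermitian matrix A with trace A = 1, one has Re(wᴴ A w) / (Re(bᴴ A b) + σ) ≤ sup over unit vectors v ∈ ℂ^n of |wᴴ v|² / (|bᴴ v|² + σ). (Thus the supremum of the ratio over trace-one PSD matrices equals its supremum over rank-one orthogonal projections, i.e., a single transmit direction is optimal.) -/
open Matrix
open scoped ComplexOrder InnerProductSpace

/-!
Write `A = ∑ₖ λₖ uₖ uₖᴴ` with orthonormal eigenvectors `uₖ`, `λₖ ≥ 0` and `∑ₖ λₖ = tr A = 1`.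
Then `wᴴ A w = ∑ₖ λₖ |wᴴ uₖ|²`, likewise for `b`, and `σ = ∑ₖ λₖ σ`, so the ratio at `A` is a
weighted mediant of the ratios at the unit vectors `uₖ`, hence at most their supremum.
-/

namespace Matrix.IsHermitian

variable {𝕜 n : Type*} [RCLike 𝕜] [Fintype n] [DecidableEq n] {A : Matrix n n 𝕜}

lemma star_dotProduct_mulVec_eq_sum (hA : A.IsHermitian) (w : n → 𝕜) :
    star w ⬝ᵥ A *ᵥ w =
      ∑ i, (hA.eigenvalues i : 𝕜) * (‖star w ⬝ᵥ ⇑(hA.eigenvectorBasis i)‖ : 𝕜) ^ 2 := by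
  set u := hA.eigenvectorBasis
  set W : EuclideanSpace 𝕜 n := WithLp.toLp 2 w
  have hsym : (toEuclideanLin A).IsSymmetric := isSymmetric_toEuclideanLin_iff.mpr hA
  have heig : ∀ i, toEuclideanLin A (u i) = (hA.eigenvalues i : 𝕜) • u i := fun i => by
    apply WithLp.ofLp_injective 2
    rw [WithLp.ofLp_smul, ← RCLike.real_smul_eq_coe_smul]
    exact hA.mulVec_eigenvectorBasis i
  have hdot : ∀ v : EuclideanSpace 𝕜 n, ⟪W, v⟫_𝕜 = star w ⬝ᵥ WithLp.ofLp v := fun v =>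
    dotProduct_comm _ _
  have hterm : ∀ i, ⟪W, u i⟫_𝕜 * ⟪u i, toEuclideanLin A W⟫_𝕜
      = (hA.eigenvalues i : 𝕜) * (‖⟪W, u i⟫_𝕜‖ : 𝕜) ^ 2 := fun i => by
    rw [← hsym, heig, inner_smul_left, RCLike.conj_ofReal, ← inner_conj_symm (u i),
      mul_left_comm, RCLike.mul_conj]
  change star w ⬝ᵥ WithLp.ofLp (toEuclideanLin A W) = _
  rw [← hdot, ← u.sum_inner_mul_inner]
  simp_rw [hterm, hdot]

lemma re_star_dotProduct_mulVec_eq_sum (hA : A.IsHermitian) (w : n → 𝕜) :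
    RCLike.re (star w ⬝ᵥ A *ᵥ w) =
      ∑ i, hA.eigenvalues i * ‖star w ⬝ᵥ ⇑(hA.eigenvectorBasis i)‖ ^ 2 := by
  rw [hA.star_dotProduct_mulVec_eq_sum]
  simp only [map_sum, ← RCLike.ofReal_pow, ← RCLike.ofReal_mul, RCLike.ofReal_re]

end Matrix.IsHermitian

lemma Finset.sum_mul_div_sum_mul_add_le {ι : Type*} (s : Finset ι) {d x y : ι → ℝ} {σ M : ℝ}
    (hd : ∀ i ∈ s, 0 ≤ d i) (hd_sum : ∑ i ∈ s, d i = 1) (hy : ∀ i ∈ s, 0 ≤ y i) (hσ : 0 < σ)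
    (hM : ∀ i ∈ s, x i / (y i + σ) ≤ M) :
    (∑ i ∈ s, d i * x i) / (∑ i ∈ s, d i * y i + σ) ≤ M := by
  have hden : 0 < ∑ i ∈ s, d i * y i + σ := by
    have := Finset.sum_nonneg fun i hi => mul_nonneg (hd i hi) (hy i hi)
    linarith
  rw [div_le_iff₀ hden]
  calc ∑ i ∈ s, d i * x i ≤ ∑ i ∈ s, d i * (M * (y i + σ)) :=
        Finset.sum_le_sum fun i hi => mul_le_mul_of_nonneg_left
          ((div_le_iff₀ (by linarith [hy i hi])).mp (hM i hi)) (hd i hi)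
    _ = M * (∑ i ∈ s, d i * y i + σ * ∑ i ∈ s, d i) := by
        rw [Finset.mul_sum, ← Finset.sum_add_distrib, Finset.mul_sum]
        exact Finset.sum_congr rfl fun i _ => by ring
    _ = M * (∑ i ∈ s, d i * y i + σ) := by rw [hd_sum, mul_one]

lemma bddAbove_norm_star_dotProduct_sq_div {n : Type*} [Fintype n] (w b : n → ℂ) {σ : ℝ}
    (hσ : 0 < σ) :
    BddAbove { r : ℝ | ∃ v : n → ℂ, (∑ i, ‖v i‖ ^ 2) = 1 ∧
      r = ‖star w ⬝ᵥ v‖ ^ 2 / (‖star b ⬝ᵥ v‖ ^ 2 + σ) } := by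
  refine ⟨‖WithLp.toLp 2 w‖ ^ 2 / σ, ?_⟩
  rintro r ⟨v, hv, rfl⟩
  have hcs : ‖star w ⬝ᵥ v‖ ≤ ‖WithLp.toLp 2 w‖ := by
    have hvnorm : ‖(WithLp.toLp 2 v : EuclideanSpace ℂ n)‖ = 1 := by
      rw [EuclideanSpace.norm_eq, hv, Real.sqrt_one]
    have hinner : ⟪(WithLp.toLp 2 w : EuclideanSpace ℂ n), WithLp.toLp 2 v⟫_ℂ = star w ⬝ᵥ v :=
      dotProduct_comm _ _
    simpa [hinner, hvnorm] using norm_inner_le_norm (𝕜 := ℂ) (WithLp.toLp 2 w : EuclideanSpace ℂ n)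
      (WithLp.toLp 2 v)
  gcongr
  exact le_add_of_nonneg_left (sq_nonneg _)

/-- The SNR-type ratio at any trace-one PSD covariance is bounded by the
supremum of the corresponding ratio over unit vectors (rank-one directions). -/
theorem stmt_1 (n : ℕ) (w b : Fin n → ℂ) (σ : ℝ) (hσ : 0 < σ)
    (A : Matrix (Fin n) (Fin n) ℂ) (hA : A.PosSemidef) (htr : A.trace = 1) :
    (star w ⬝ᵥ A.mulVec w).re / ((star b ⬝ᵥ A.mulVec b).re + σ)
      ≤ sSup { r : ℝ | ∃ v : Fin n → ℂ, (∑ i, ‖v i‖ ^ 2) = 1 ∧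
          r = ‖star w ⬝ᵥ v‖ ^ 2 / (‖star b ⬝ᵥ v‖ ^ 2 + σ) } := by
  set u := hA.1.eigenvectorBasis
  have hunit : ∀ i, ∑ j, ‖u i j‖ ^ 2 = 1 := fun i => by
    rw [← EuclideanSpace.norm_sq_eq, u.orthonormal.1 i, one_pow]
  have htrace : ∑ i, hA.1.eigenvalues i = 1 := by
    simpa [htr] using congrArg Complex.re hA.1.trace_eq_sum_eigenvalues.symm
  rw [← RCLike.re_eq_complex_re, hA.1.re_star_dotProduct_mulVec_eq_sum,
    hA.1.re_star_dotProduct_mulVec_eq_sum]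
  refine Finset.sum_mul_div_sum_mul_add_le _ (fun i _ => hA.eigenvalues_nonneg i) htrace
    (fun i _ => sq_nonneg _) hσ fun i _ => ?_
  exact le_csSup (bddAbove_norm_star_dotProduct_sq_div w b hσ) ⟨u i, hunit i, rfl⟩
end

section
/- (Optimal jammer strategy with full CSI, single-antenna Bob.) Let w, b ∈ ℂ^N with w ≠ 0, let σ > 0, and set B := b bᴴ + σ·I (an N×N Hermitian positive definite matrix). Then for every N×N complex positive semidefinite Hermitian matrix A with trace A = 1, Re(wᴴ A w) / (Re(bᴴ A b) + σ) ≤ Re(wᴴ B⁻¹ w), and equality holds for the rank-one matrix A* = v* (v*)ᴴ, where v* = B⁻¹w / ‖B⁻¹w‖. Hence the optimal normalized covariance is rank one: beamforming all power in the single direction v*. -/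
open Matrix
open scoped ComplexOrder

/-!
Since `tr A = 1`, the denominator `bᴴAb + σ` equals `Re tr(AB)`, so the claim is
`wᴴAw ≤ Re tr(AB) · wᴴB⁻¹w`. Both sides are additive in `A`, and every positive semidefinite
`A` is a sum of rank-one matrices `v vᴴ`; for these the inequality reads
`|vᴴw|² ≤ (vᴴBv)(wᴴB⁻¹w)`, which is Cauchy–Schwarz for the inner product defined by `B`,
applied to `v` and `B⁻¹w`. Equality holds when `v` is parallel to `B⁻¹w`.
-/

namespace Matrix

variable {𝕜 n : Type*} [RCLike 𝕜] [Fintype n]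

open RCLike

theorem PosSemidef.norm_dotProduct_mulVec_sq_le {M : Matrix n n 𝕜} (hM : M.PosSemidef)
    (x y : n → 𝕜) :
    ‖star x ⬝ᵥ M *ᵥ y‖ ^ 2 ≤ re (star x ⬝ᵥ M *ᵥ x) * re (star y ⬝ᵥ M *ᵥ y) := by
  let _ := M.toSeminormedAddCommGroup hM
  let _ := M.toInnerProductSpace hM
  have hinner (u v : n → 𝕜) : inner 𝕜 u v = star u ⬝ᵥ M *ᵥ v := dotProduct_comm _ _
  have key := inner_mul_inner_self_le (𝕜 := 𝕜) x y
  rw [norm_inner_symm y x, hinner, hinner, hinner] at key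
  exact (sq _).trans_le key

theorem trace_vecMulVec_star_mul (v : n → 𝕜) (B : Matrix n n 𝕜) :
    (vecMulVec v (star v) * B).trace = star v ⬝ᵥ B *ᵥ v := by
  rw [vecMulVec_mul, trace_vecMulVec, dotProduct_comm, dotProduct_mulVec]

theorem re_dotProduct_vecMulVec_star_mulVec (v w : n → 𝕜) :
    re (star w ⬝ᵥ vecMulVec v (star v) *ᵥ w) = ‖star v ⬝ᵥ w‖ ^ 2 := by
  rw [vecMulVec_mulVec, op_smul_eq_smul, dotProduct_smul, smul_eq_mul, star_dotProduct w v,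
    RCLike.star_def, RCLike.mul_conj, ← ofReal_pow, ofReal_re]

theorem dotProduct_star_self_of_smul_inv_sqrt {v : n → 𝕜} (hv : v ≠ 0) :
    (((√(∑ i, ‖v i‖ ^ 2) : ℝ) : 𝕜)⁻¹ • v) ⬝ᵥ star (((√(∑ i, ‖v i‖ ^ 2) : ℝ) : 𝕜)⁻¹ • v) = 1 := by
  rw [← EuclideanSpace.inner_toLp_toLp, ← EuclideanSpace.norm_eq (WithLp.toLp 2 v),
    WithLp.toLp_smul, inner_self_eq_norm_sq_to_K, norm_smul_inv_norm (by simpa using hv),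
    ofReal_one, one_pow]

variable [DecidableEq n]

theorem PosDef.mulVec_inv_mulVec {B : Matrix n n 𝕜} (hB : B.PosDef) (w : n → 𝕜) :
    B *ᵥ (B⁻¹ *ᵥ w) = w := by
  rw [mulVec_mulVec, mul_nonsing_inv B hB.det_pos.ne'.isUnit, one_mulVec]

theorem PosDef.norm_star_dotProduct_sq_le {B : Matrix n n 𝕜} (hB : B.PosDef) (v w : n → 𝕜) :
    ‖star v ⬝ᵥ w‖ ^ 2 ≤ re (star v ⬝ᵥ B *ᵥ v) * re (star w ⬝ᵥ B⁻¹ *ᵥ w) := by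
  have h := hB.posSemidef.norm_dotProduct_mulVec_sq_le v (B⁻¹ *ᵥ w)
  rwa [hB.mulVec_inv_mulVec, star_dotProduct (B⁻¹ *ᵥ w) w, RCLike.star_def, conj_re] at h

theorem PosDef.norm_star_dotProduct_sq_eq_of_smul_inv_mulVec {B : Matrix n n 𝕜}
    (hB : B.PosDef) (c : 𝕜) (w : n → 𝕜) :
    ‖star (c • B⁻¹ *ᵥ w) ⬝ᵥ w‖ ^ 2
      = re (star (c • B⁻¹ *ᵥ w) ⬝ᵥ B *ᵥ (c • B⁻¹ *ᵥ w)) * re (star w ⬝ᵥ B⁻¹ *ᵥ w) := by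
  set t := star w ⬝ᵥ B⁻¹ *ᵥ w
  have ht_im : im t = 0 := hB.inv.isHermitian.im_star_dotProduct_mulVec_self w
  have ht : star (B⁻¹ *ᵥ w) ⬝ᵥ w = t := by
    rw [star_dotProduct, RCLike.star_def, conj_eq_iff_im.mpr ht_im]
  rw [mulVec_smul, hB.mulVec_inv_mulVec, star_smul, smul_dotProduct, smul_dotProduct,
    dotProduct_smul, ht, smul_eq_mul, smul_eq_mul, smul_eq_mul, ← mul_assoc, RCLike.star_def,
    RCLike.conj_mul, norm_mul, RCLike.norm_conj, ← ofReal_pow, re_ofReal_mul, mul_pow,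
    norm_sq_eq_def (z := t), ht_im]
  ring

theorem PosSemidef.re_dotProduct_mulVec_le_re_trace_mul {A B : Matrix n n 𝕜}
    (hA : A.PosSemidef) (hB : B.PosDef) (w : n → 𝕜) :
    re (star w ⬝ᵥ A *ᵥ w) ≤ re (A * B).trace * re (star w ⬝ᵥ B⁻¹ *ᵥ w) := by
  obtain ⟨m, v, rfl⟩ := posSemidef_iff_eq_sum_vecMulVec.mp hA
  simp only [sum_mulVec, dotProduct_sum, Finset.sum_mul, trace_sum, map_sum,
    re_dotProduct_vecMulVec_star_mulVec, trace_vecMulVec_star_mul]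
  exact Finset.sum_le_sum fun i _ => hB.norm_star_dotProduct_sq_le (v i) w

theorem posDef_vecMulVec_star_add_smul_one (b : n → 𝕜) {σ : ℝ} (hσ : 0 < σ) :
    (vecMulVec b (star b) + (σ : 𝕜) • 1).PosDef :=
  PosDef.posSemidef_add (posSemidef_vecMulVec_self_star b) (PosDef.one.smul (ofReal_pos.mpr hσ))

theorem re_trace_mul_vecMulVec_star_add_smul_one {A : Matrix n n 𝕜} (hA : A.trace = 1)
    (b : n → 𝕜) (σ : ℝ) :
    re (A * (vecMulVec b (star b) + (σ : 𝕜) • 1)).trace = re (star b ⬝ᵥ A *ᵥ b) + σ := by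
  rw [mul_add, trace_add, mul_vecMulVec, trace_vecMulVec, dotProduct_comm, mul_smul_comm,
    mul_one, trace_smul, hA, smul_eq_mul, mul_one, map_add, ofReal_re]

end Matrix

/-- Optimal jammer strategy with full CSI and single-antenna Bob: the ratio at any
trace-one PSD covariance is at most `wᴴ(b bᴴ + σI)⁻¹w`, with equality at the rank-one
beamformer `v* (v*)ᴴ`, `v* = B⁻¹w/‖B⁻¹w‖`. -/
theorem stmt_3 (N : ℕ) (w b : Fin N → ℂ) (hw : w ≠ 0) (σ : ℝ) (hσ : 0 < σ)
    (B : Matrix (Fin N) (Fin N) ℂ)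
    (hB : B = vecMulVec b (star b) + (σ : ℂ) • 1)
    (vstar : Fin N → ℂ)
    (hv : vstar = ((Real.sqrt (∑ i, ‖(B⁻¹.mulVec w) i‖ ^ 2) : ℝ) : ℂ)⁻¹ • B⁻¹.mulVec w)
    (Astar : Matrix (Fin N) (Fin N) ℂ)
    (hAstar : Astar = vecMulVec vstar (star vstar)) :
    (∀ A : Matrix (Fin N) (Fin N) ℂ, A.PosSemidef → A.trace = 1 →
      (star w ⬝ᵥ A.mulVec w).re / ((star b ⬝ᵥ A.mulVec b).re + σ)
        ≤ (star w ⬝ᵥ B⁻¹.mulVec w).re) ∧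
    Astar.PosSemidef ∧ Astar.trace = 1 ∧
    (star w ⬝ᵥ Astar.mulVec w).re / ((star b ⬝ᵥ Astar.mulVec b).re + σ)
      = (star w ⬝ᵥ B⁻¹.mulVec w).re := by
  have hBpos : B.PosDef := hB ▸ posDef_vecMulVec_star_add_smul_one b hσ
  have hden {A : Matrix (Fin N) (Fin N) ℂ} (hA : A.trace = 1) :
      (star b ⬝ᵥ A *ᵥ b).re + σ = (A * B).trace.re :=
    hB ▸ (re_trace_mul_vecMulVec_star_add_smul_one hA b σ).symm
  have hm : B⁻¹ *ᵥ w ≠ 0 := fun h => hw (by rw [← hBpos.mulVec_inv_mulVec w, h, mulVec_zero])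
  have htrace : Astar.trace = 1 := by
    rw [hAstar, trace_vecMulVec, hv]
    exact dotProduct_star_self_of_smul_inv_sqrt hm
  refine ⟨fun A hA htr => ?_, hAstar ▸ posSemidef_vecMulVec_self_star vstar, htrace, ?_⟩
  · have hpos : 0 < (star b ⬝ᵥ A *ᵥ b).re + σ :=
      add_pos_of_nonneg_of_pos (hA.re_dotProduct_nonneg b) hσ
    rw [div_le_iff₀' hpos, hden htr]
    exact hA.re_dotProduct_mulVec_le_re_trace_mul hBpos w
  · have hvstar : vstar ≠ 0 := by
      rintro rfl
      simp [hAstar] at htrace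
    have hnum : (star w ⬝ᵥ Astar *ᵥ w).re = ‖star vstar ⬝ᵥ w‖ ^ 2 :=
      hAstar ▸ re_dotProduct_vecMulVec_star_mulVec vstar w
    have hequality : ‖star vstar ⬝ᵥ w‖ ^ 2
        = (star vstar ⬝ᵥ B *ᵥ vstar).re * (star w ⬝ᵥ B⁻¹ *ᵥ w).re := by
      rw [hv]
      exact hBpos.norm_star_dotProduct_sq_eq_of_smul_inv_mulVec _ w
    have hvstar_pos : 0 < (star vstar ⬝ᵥ B *ᵥ vstar).re := hBpos.re_dotProduct_pos hvstar
    rw [hnum, hden htrace, hAstar, trace_vecMulVec_star_mul, hequality,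
      mul_div_cancel_left₀ _ hvstar_pos.ne']
end

section
/- (Optimal jammer strategy with unknown CSI of Willie, single-antenna Bob.) Let N ≥ 2, h ∈ ℂ^N with h ≠ 0, and σ > 0. For an integer d with 1 ≤ d ≤ N and an N×d complex matrix V with orthonormal columns (Vᴴ V = I_d), define F(d,V) := d / ((1/d)·‖Vᴴ h‖² + σ). Then: (i) for all such (d,V), F(d,V) ≤ max{ (N−1)/σ , N² / (‖h‖² + N·σ) }; (ii) the value (N−1)/σ is attained by d = N−1 with the columns of V an orthonormal basis of the orthogonal complement of h, and the value N²/(‖h‖² + N·σ) is attained by d = N with V unitary; (iii) consequently the supremum of F equals (N−1)/σ if σ ≤ ((N−1)/N)·‖h‖², and equals N²/(‖h‖² + N·σ) otherwise. -/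
/-!
Writing `t = ‖Vᴴ h‖²`, the jammed SNR is `d / (t / d + σ) ≤ d / σ`, with equality exactly when the
jammer avoids Bob (`t = 0`). For `d < N` this is at most `(N - 1) / σ`, attained by `N - 1`
orthonormal directions in the orthogonal complement of `h`; for `d = N` the matrix `V` is unitary,
so `t = ‖h‖²` and the SNR is `N² / (‖h‖² + N σ)` whatever `V` is. Comparing the two values gives
the threshold `σ ≤ (N - 1) / N · ‖h‖²`.
-/

open Matrix

section Isometry

variable {𝕜 : Type*} [RCLike 𝕜]

theorem sum_norm_sq_eq_re_dotProduct_star {n : Type*} [Fintype n] (x : n → 𝕜) :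
    ∑ i, ‖x i‖ ^ 2 = RCLike.re (x ⬝ᵥ star x) := by
  rw [← EuclideanSpace.inner_toLp_toLp, ← norm_sq_eq_re_inner (𝕜 := 𝕜), EuclideanSpace.norm_sq_eq]

theorem sum_norm_sq_mulVec_of_conjTranspose_mul_self {m n : Type*} [Fintype m] [Fintype n]
    [DecidableEq n] {V : Matrix m n 𝕜} (hV : Vᴴ * V = 1) (x : n → 𝕜) :
    ∑ i, ‖(V *ᵥ x) i‖ ^ 2 = ∑ j, ‖x j‖ ^ 2 := by
  rw [sum_norm_sq_eq_re_dotProduct_star, sum_norm_sq_eq_re_dotProduct_star, dotProduct_comm,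
    star_mulVec, dotProduct_mulVec, vecMul_vecMul, hV, vecMul_one, dotProduct_comm]

theorem sum_norm_sq_conjTranspose_mulVec_of_unitary {n : Type*} [Fintype n] [DecidableEq n]
    {V : Matrix n n 𝕜} (hV : Vᴴ * V = 1) (x : n → 𝕜) :
    ∑ i, ‖(Vᴴ *ᵥ x) i‖ ^ 2 = ∑ j, ‖x j‖ ^ 2 :=
  sum_norm_sq_mulVec_of_conjTranspose_mul_self
    (by rw [conjTranspose_conjTranspose, mul_eq_one_comm.mp hV]) x

theorem exists_conjTranspose_mul_self_eq_one_and_conjTranspose_mulVec_eq_zero {n k : ℕ}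
    (hk : k < n) (h : Fin n → 𝕜) : ∃ V : Matrix (Fin n) (Fin k) 𝕜, Vᴴ * V = 1 ∧ Vᴴ *ᵥ h = 0 := by
  have hK : k ≤ Module.finrank 𝕜 (𝕜 ∙ WithLp.toLp 2 h)ᗮ := by
    have hsum := (𝕜 ∙ WithLp.toLp 2 h).finrank_add_finrank_orthogonal
    have hspan := finrank_span_le_card (R := 𝕜) {WithLp.toLp 2 h}
    simp only [finrank_euclideanSpace_fin, Set.toFinset_singleton, Finset.card_singleton]
      at hsum hspan
    omega
  set K := (𝕜 ∙ WithLp.toLp 2 h)ᗮ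
  let v : Fin k → EuclideanSpace 𝕜 (Fin n) := fun j ↦ stdOrthonormalBasis 𝕜 K (Fin.castLE hK j)
  have hv : Orthonormal 𝕜 v :=
    ((stdOrthonormalBasis 𝕜 K).orthonormal.comp _
      (Fin.castLE_injective hK)).comp_linearIsometry K.subtypeₗᵢ
  refine ⟨of fun i j ↦ v j i, ?_, ?_⟩
  · rw [← gram_eq_one_iff_orthonormal] at hv
    rw [← hv, gram_eq_conjTranspose_mul (EuclideanSpace.basisFun _ 𝕜)]
    rfl
  · ext j
    have hvj : inner 𝕜 (v j) (WithLp.toLp 2 h) = 0 :=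
      Submodule.mem_orthogonal_singleton_iff_inner_left.mp (stdOrthonormalBasis 𝕜 K _).2
    rw [EuclideanSpace.inner_eq_star_dotProduct, dotProduct_comm] at hvj
    simpa [mulVec, dotProduct] using hvj

end Isometry

section JammerSNR

variable {N d : ℕ} (h : Fin N → ℂ) (σ : ℝ)

/-- The paper's `F(d, V)`. -/
noncomputable def jammerSNR (V : Matrix (Fin N) (Fin d) ℂ) : ℝ :=
  d / ((1 / (d : ℝ)) * (∑ j, ‖(Vᴴ *ᵥ h) j‖ ^ 2) + σ)

variable {h σ}

theorem jammerSNR_le_div (hσ : 0 < σ) (V : Matrix (Fin N) (Fin d) ℂ) :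
    jammerSNR h σ V ≤ d / σ := by
  unfold jammerSNR
  gcongr
  exact le_add_of_nonneg_left (by positivity)

theorem jammerSNR_of_conjTranspose_mulVec_eq_zero {V : Matrix (Fin N) (Fin d) ℂ}
    (hV : Vᴴ *ᵥ h = 0) : jammerSNR h σ V = d / σ := by
  simp [jammerSNR, hV]

theorem jammerSNR_of_unitary {V : Matrix (Fin N) (Fin N) ℂ} (hV : Vᴴ * V = 1) :
    jammerSNR h σ V = (N : ℝ) ^ 2 / ((∑ i, ‖h i‖ ^ 2) + N * σ) := by
  rw [jammerSNR, sum_norm_sq_conjTranspose_mulVec_of_unitary hV]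
  rcases N.eq_zero_or_pos with rfl | hN
  · simp
  · rw [← mul_div_mul_left _ _ (by positivity : (N : ℝ) ≠ 0), sq]
    congr 1
    field_simp

theorem jammerSNR_le_max (hσ : 0 < σ) (hd : d ≤ N) {V : Matrix (Fin N) (Fin d) ℂ}
    (hV : Vᴴ * V = 1) :
    jammerSNR h σ V ≤ max (((N : ℝ) - 1) / σ) ((N : ℝ) ^ 2 / ((∑ i, ‖h i‖ ^ 2) + N * σ)) := by
  rcases hd.lt_or_eq with hd | rfl
  · refine (jammerSNR_le_div hσ V).trans (le_max_of_le_left ?_)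
    have : (d : ℝ) + 1 ≤ N := by exact_mod_cast hd
    gcongr
    linarith
  · exact (jammerSNR_of_unitary hV).le.trans (le_max_right _ _)

end JammerSNR

theorem max_sub_one_div_sq_div_eq_ite {n S σ : ℝ} (hn : 0 < n) (hσ : 0 < σ) (hS : 0 ≤ S) :
    max ((n - 1) / σ) (n ^ 2 / (S + n * σ)) =
      if σ ≤ (n - 1) / n * S then (n - 1) / σ else n ^ 2 / (S + n * σ) := by
  rw [max_def']
  refine if_congr ?_ rfl rfl
  rw [div_le_div_iff₀ (by positivity) hσ, div_mul_eq_mul_div, le_div_iff₀ hn]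
  constructor <;> intro <;> nlinarith

theorem stmt_6_general (N : ℕ) (hN : 2 ≤ N) (h : Fin N → ℂ)
    (σ : ℝ) (hσ : 0 < σ) :
    (∀ d : ℕ, 1 ≤ d → d ≤ N → ∀ V : Matrix (Fin N) (Fin d) ℂ, Vᴴ * V = 1 →
      (d : ℝ) / ((1 / (d : ℝ)) * (∑ j, ‖(Vᴴ.mulVec h) j‖ ^ 2) + σ)
        ≤ max (((N : ℝ) - 1) / σ)
            ((N : ℝ) ^ 2 / ((∑ i, ‖h i‖ ^ 2) + (N : ℝ) * σ))) ∧
    (∃ V : Matrix (Fin N) (Fin (N - 1)) ℂ, Vᴴ * V = 1 ∧ Vᴴ.mulVec h = 0 ∧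
      ((N - 1 : ℕ) : ℝ) /
          ((1 / ((N - 1 : ℕ) : ℝ)) * (∑ j, ‖(Vᴴ.mulVec h) j‖ ^ 2) + σ)
        = ((N : ℝ) - 1) / σ) ∧
    (∃ V : Matrix (Fin N) (Fin N) ℂ, Vᴴ * V = 1 ∧
      (N : ℝ) / ((1 / (N : ℝ)) * (∑ j, ‖(Vᴴ.mulVec h) j‖ ^ 2) + σ)
        = (N : ℝ) ^ 2 / ((∑ i, ‖h i‖ ^ 2) + (N : ℝ) * σ)) ∧
    sSup { r : ℝ | ∃ d : ℕ, 1 ≤ d ∧ d ≤ N ∧ ∃ V : Matrix (Fin N) (Fin d) ℂ,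
          Vᴴ * V = 1 ∧
          r = (d : ℝ) / ((1 / (d : ℝ)) * (∑ j, ‖(Vᴴ.mulVec h) j‖ ^ 2) + σ) }
      = if σ ≤ (((N : ℝ) - 1) / (N : ℝ)) * (∑ i, ‖h i‖ ^ 2)
        then ((N : ℝ) - 1) / σ
        else (N : ℝ) ^ 2 / ((∑ i, ‖h i‖ ^ 2) + (N : ℝ) * σ) := by
  obtain ⟨V₀, hV₀, hV₀h⟩ := exists_conjTranspose_mul_self_eq_one_and_conjTranspose_mulVec_eq_zero
    (N.sub_lt (by omega) one_pos) h
  have nullSpace : jammerSNR h σ V₀ = ((N : ℝ) - 1) / σ := by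
    rw [jammerSNR_of_conjTranspose_mulVec_eq_zero hV₀h, Nat.cast_pred (by omega)]
  have isotropic := jammerSNR_of_unitary (h := h) (σ := σ) (V := 1) (by simp)
  refine ⟨fun d _ hd V hV ↦ jammerSNR_le_max hσ hd hV, ⟨V₀, hV₀, hV₀h, nullSpace⟩,
    ⟨1, by simp, isotropic⟩, ?_⟩
  rw [IsGreatest.csSup_eq (a := max (((N : ℝ) - 1) / σ)
      ((N : ℝ) ^ 2 / ((∑ i, ‖h i‖ ^ 2) + N * σ))) ⟨?_, ?_⟩,
    max_sub_one_div_sq_div_eq_ite (by positivity) hσ (by positivity)]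
  · rcases max_choice (((N : ℝ) - 1) / σ) ((N : ℝ) ^ 2 / ((∑ i, ‖h i‖ ^ 2) + N * σ))
      with hm | hm <;> rw [hm]
    · exact ⟨N - 1, by omega, N.sub_le 1, V₀, hV₀, nullSpace.symm⟩
    · exact ⟨N, by omega, le_rfl, 1, by simp, isotropic.symm⟩
  · rintro _ ⟨d, -, hd, V, hV, rfl⟩
    exact jammerSNR_le_max hσ hd hV

/-- Optimal jammer strategy with unknown CSI of Willie and single-antenna Bob:
bound, attainment at null-space / isotropic strategies, and the threshold rule. -/
theorem stmt_6 (N : ℕ) (hN : 2 ≤ N) (h : Fin N → ℂ) (hh : h ≠ 0)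
    (σ : ℝ) (hσ : 0 < σ) :
    (∀ d : ℕ, 1 ≤ d → d ≤ N → ∀ V : Matrix (Fin N) (Fin d) ℂ, Vᴴ * V = 1 →
      (d : ℝ) / ((1 / (d : ℝ)) * (∑ j, ‖(Vᴴ.mulVec h) j‖ ^ 2) + σ)
        ≤ max (((N : ℝ) - 1) / σ)
            ((N : ℝ) ^ 2 / ((∑ i, ‖h i‖ ^ 2) + (N : ℝ) * σ))) ∧
    (∃ V : Matrix (Fin N) (Fin (N - 1)) ℂ, Vᴴ * V = 1 ∧ Vᴴ.mulVec h = 0 ∧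
      ((N - 1 : ℕ) : ℝ) /
          ((1 / ((N - 1 : ℕ) : ℝ)) * (∑ j, ‖(Vᴴ.mulVec h) j‖ ^ 2) + σ)
        = ((N : ℝ) - 1) / σ) ∧
    (∃ V : Matrix (Fin N) (Fin N) ℂ, Vᴴ * V = 1 ∧
      (N : ℝ) / ((1 / (N : ℝ)) * (∑ j, ‖(Vᴴ.mulVec h) j‖ ^ 2) + σ)
        = (N : ℝ) ^ 2 / ((∑ i, ‖h i‖ ^ 2) + (N : ℝ) * σ)) ∧
    sSup { r : ℝ | ∃ d : ℕ, 1 ≤ d ∧ d ≤ N ∧ ∃ V : Matrix (Fin N) (Fin d) ℂ,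
          Vᴴ * V = 1 ∧
          r = (d : ℝ) / ((1 / (d : ℝ)) * (∑ j, ‖(Vᴴ.mulVec h) j‖ ^ 2) + σ) }
      = if σ ≤ (((N : ℝ) - 1) / (N : ℝ)) * (∑ i, ‖h i‖ ^ 2)
        then ((N : ℝ) - 1) / σ
        else (N : ℝ) ^ 2 / ((∑ i, ‖h i‖ ^ 2) + (N : ℝ) * σ) :=
  stmt_6_general N hN h σ hσ
end

section
/- (Chernoff lower-tail bound for the chi-squared distribution with 2d degrees of freedom; key estimate in Theorem 2.) Let d ≥ 1 be a natural number and let μ be the Gamma distribution on ℝ with shape d and rate 1/2 (the chi-squared distribution with 2d degrees of freedom). Then for every real β with 0 < β < 2d, μ{ x ∈ ℝ : x < β } ≤ ( (β/(2d)) · e^{1 − β/(2d)} )^d. -/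
open MeasureTheory ProbabilityTheory Real Set

/-!
Exponential tilting: on `x ≤ β` the Gamma density of rate `r` is at most
`(r/s)^a e^{(s-r)β}` times the Gamma density of rate `s ≥ r`, and the latter integrates to one.
The tilt `s = a/β` minimises this bound, which then becomes `(rβ/a · e^{1 - rβ/a})^a`.
-/

lemma gammaPDFReal_le_of_le_rate {a r s x β : ℝ} (ha : 0 < a) (hr : 0 < r) (hrs : r ≤ s)
    (hxβ : x ≤ β) :
    gammaPDFReal a r x ≤ (r / s) ^ a * exp ((s - r) * β) * gammaPDFReal a s x := by
  rcases lt_or_ge x 0 with hx | hx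
  · simp [gammaPDFReal, not_le.mpr hx]
  have hs : 0 < s := hr.trans_le hrs
  have hfactor : 0 ≤ x ^ (a - 1) / Gamma a := by
    have := Gamma_pos_of_pos ha
    positivity
  have hexp : exp (-(r * x)) ≤ exp ((s - r) * β) * exp (-(s * x)) := by
    rw [← exp_add, exp_le_exp]
    nlinarith
  simp only [gammaPDFReal, if_pos hx]
  calc r ^ a / Gamma a * x ^ (a - 1) * exp (-(r * x))
      = r ^ a * exp (-(r * x)) * (x ^ (a - 1) / Gamma a) := by ring
    _ ≤ r ^ a * (exp ((s - r) * β) * exp (-(s * x))) * (x ^ (a - 1) / Gamma a) := by gcongr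
    _ = (r / s) ^ a * exp ((s - r) * β) * (s ^ a / Gamma a * x ^ (a - 1) * exp (-(s * x))) := by
      rw [div_rpow hr.le hs.le]
      field_simp

lemma gammaMeasure_Iio_le_of_le_rate {a r s : ℝ} (β : ℝ) (ha : 0 < a) (hr : 0 < r)
    (hrs : r ≤ s) :
    gammaMeasure a r (Iio β) ≤ ENNReal.ofReal ((r / s) ^ a * exp ((s - r) * β)) := by
  have hs : 0 < s := hr.trans_le hrs
  set C := (r / s) ^ a * exp ((s - r) * β)
  have hC : 0 ≤ C := by positivity
  have hpdf : ∀ x ∈ Iio β, gammaPDF a r x ≤ ENNReal.ofReal C * gammaPDF a s x := fun x hx ↦ by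
    rw [gammaPDF, gammaPDF, ← ENNReal.ofReal_mul hC]
    exact ENNReal.ofReal_le_ofReal (gammaPDFReal_le_of_le_rate ha hr hrs (le_of_lt hx))
  rw [gammaMeasure, withDensity_apply _ measurableSet_Iio]
  calc ∫⁻ x in Iio β, gammaPDF a r x
      ≤ ∫⁻ x in Iio β, ENNReal.ofReal C * gammaPDF a s x :=
        setLIntegral_mono
          ((ENNReal.measurable_ofReal.comp (measurable_gammaPDFReal a s)).const_mul _) hpdf
    _ = ENNReal.ofReal C * ∫⁻ x in Iio β, gammaPDF a s x :=
        lintegral_const_mul' _ _ ENNReal.ofReal_ne_top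
    _ ≤ ENNReal.ofReal C * ∫⁻ x, gammaPDF a s x := by
        gcongr
        exact Measure.restrict_le_self
    _ = ENNReal.ofReal C := by
        rw [lintegral_gammaPDF_eq_one ha hs, mul_one]

lemma gammaMeasure_Iio_le_chernoff {a r β : ℝ} (ha : 0 < a) (hr : 0 < r) (hβ : 0 < β)
    (hβa : r * β ≤ a) :
    gammaMeasure a r (Iio β) ≤ ENNReal.ofReal ((r * β / a * exp (1 - r * β / a)) ^ a) := by
  have hrs : r ≤ a / β := by rwa [le_div_iff₀ hβ]
  convert gammaMeasure_Iio_le_of_le_rate β ha hr hrs using 2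
  rw [mul_rpow (by positivity) (exp_pos _).le, ← exp_mul]
  congr 2
  · field_simp
  · field_simp

theorem stmt_13_general (d : ℕ) (β : ℝ) (hβ : 0 < β) (hβ2 : β < 2 * d) :
    gammaMeasure d (1 / 2) {x : ℝ | x < β}
      ≤ ENNReal.ofReal ((β / (2 * d) * Real.exp (1 - β / (2 * d))) ^ d) := by
  have hd : (0 : ℝ) < d := by linarith
  have hβd : 1 / 2 * β ≤ d := by linarith
  have hratio : 1 / 2 * β / d = β / (2 * d) := by field_simp
  change gammaMeasure d (1 / 2) (Iio β) ≤ _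
  simpa only [hratio, rpow_natCast] using
    gammaMeasure_Iio_le_chernoff hd one_half_pos hβ hβd

/-- Chernoff lower-tail bound for the chi-squared distribution with `2d` degrees
of freedom (the Gamma distribution with shape `d` and rate `1/2`). -/
theorem stmt_13 (d : ℕ) (hd : 1 ≤ d) (β : ℝ) (hβ : 0 < β) (hβ2 : β < 2 * d) :
    gammaMeasure d (1 / 2) {x : ℝ | x < β}
      ≤ ENNReal.ofReal ((β / (2 * d) * Real.exp (1 - β / (2 * d))) ^ d) :=
  stmt_13_general d β hβ hβ2
end
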